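/- For all integers t ≥ 1 and ℓ ≥ 0, every permutation of a set of t^ℓ elements can be written as the composition of at most ℓ parallel t-merges. -/

import Mathlib

/-- `σ` is a parallel `t`-merge: its domain can be partitioned into intervals `J_1, …, J_r`
of consecutive elements, each invariant under `σ`, such that each `J_j` can be further
partitioned into `t` intervals on each of which `σ` is increasing. -/
def IsParallelTMerge {N : ℕ} (σ : Equiv.Perm (Fin N)) (t : ℕ) : Prop :=
  ∃ (r : ℕ) (c : Fin (r + 1) → ℕ),
    Monotone c ∧ c 0 = 0 ∧ c (Fin.last r) = N ∧
    (∀ (j : Fin r) (x : Fin N), c j.castSucc ≤ (x : ℕ) → (x : ℕ) < c j.succ →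
        c j.castSucc ≤ (σ x : ℕ) ∧ (σ x : ℕ) < c j.succ) ∧
    (∀ j : Fin r, ∃ b : Fin (t + 1) → ℕ,
        Monotone b ∧ b 0 = c j.castSucc ∧ b (Fin.last t) = c j.succ ∧
        ∀ (i : Fin t) (x y : Fin N),
          b i.castSucc ≤ (x : ℕ) → (y : ℕ) < b i.succ → x < y → σ x < σ y)

/-!
Merge sort. Cut `Fin (t ^ (ℓ + 1))` into `t` consecutive blocks of size `t ^ ℓ` and write
`σ = μ * π`, where `π` permutes each block separately and `μ` is increasing on each block, so
that `μ` is a single `t`-merge. By induction each block of `π` is a product of `ℓ` parallel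
`t`-merges, and placing the `m`-th factors of all blocks side by side gives a parallel `t`-merge.

Parallel merges are handled through labellings `κ : Fin N → ℕ` (`IsParallelMergeLabelling`),
which are easy to concatenate; the cut points of `IsParallelTMerge` are recovered by counting
the elements with a smaller label.
-/

open Equiv Finset

namespace Fin
variable {m n : ℕ}

theorem divNat_mono : Monotone (divNat : Fin (m * n) → Fin m) := fun _ _ h =>
  Nat.div_le_div_right (c := n) h

theorem lt_iff_modNat_lt_of_divNat_eq {x y : Fin (m * n)} (h : x.divNat = y.divNat) :
    x < y ↔ x.modNat < y.modNat := by
  have hx := Nat.mod_add_div x n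
  have hy := Nat.mod_add_div y n
  rw [show (x : ℕ) / n = y / n from congrArg Fin.val h] at hx
  rw [Fin.lt_def, Fin.lt_def, coe_modNat, coe_modNat]
  omega

theorem le_iff_modNat_le_of_divNat_eq {x y : Fin (m * n)} (h : x.divNat = y.divNat) :
    x ≤ y ↔ x.modNat ≤ y.modNat := by
  rw [← not_lt, ← not_lt, lt_iff_modNat_lt_of_divNat_eq h.symm]

end Fin

theorem Monotone.val_lt_card_filter_lt_iff {N : ℕ} {α : Type*} [Preorder α] [DecidableLT α]
    {f : Fin N → α} (hf : Monotone f) (a : α) (x : Fin N) :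
    (x : ℕ) < #{y | f y < a} ↔ f x < a := by
  constructor
  · intro hx
    by_contra hxa
    have hsub : ({y | f y < a} : Finset _) ⊆ Iio x := fun y hy => by
      rw [mem_filter] at hy
      exact mem_Iio.2 (lt_of_not_ge fun hxy => hxa ((hf hxy).trans_lt hy.2))
    have := card_le_card hsub
    rw [Fin.card_Iio] at this
    omega
  · intro hxa
    have hsub : Iic x ⊆ ({y | f y < a} : Finset _) := fun y hy =>
      mem_filter.2 ⟨mem_univ y, (hf (mem_Iic.1 hy)).trans_lt hxa⟩
    have := card_le_card hsub
    rw [Fin.card_Iic] at this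
    omega

/-- `κ x = t * j + i` when `x` lies in the `i`-th of the `t` intervals of the `j`-th block. -/
structure IsParallelMergeLabelling {N : ℕ} (σ : Perm (Fin N)) (t : ℕ) (κ : Fin N → ℕ) : Prop where
  monotone : Monotone κ
  lt_mul : ∀ x, κ x < N * t
  apply_div : ∀ x, κ (σ x) / t = κ x / t
  apply_lt_apply : ∀ x y, κ x = κ y → x < y → σ x < σ y

theorem IsParallelMergeLabelling.isParallelTMerge {N t : ℕ} {σ : Perm (Fin N)} {κ : Fin N → ℕ}
    (h : IsParallelMergeLabelling σ t κ) (ht : 0 < t) : IsParallelTMerge σ t := by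
  set cut : ℕ → ℕ := fun a => #{x | κ x < a}
  have lt_cut : ∀ a (x : Fin N), (x : ℕ) < cut a ↔ κ x < a := h.monotone.val_lt_card_filter_lt_iff
  have cut_le : ∀ a (x : Fin N), cut a ≤ x ↔ a ≤ κ x := fun a x => by
    rw [← not_lt, lt_cut, not_lt]
  have cut_mono : Monotone cut := fun a b hab =>
    card_le_card (monotone_filter_right _ fun _ _ hx => lt_of_lt_of_le hx hab)
  refine ⟨N, fun j => cut (j * t), fun j k hjk => cut_mono (Nat.mul_le_mul_right t hjk),
    by simp [cut], by simp [cut, h.lt_mul], ?_, ?_⟩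
  · intro j x hjx hxj
    simp only [Fin.val_castSucc, Fin.val_succ, cut_le, lt_cut] at hjx hxj ⊢
    rw [← Nat.le_div_iff_mul_le ht, ← h.apply_div] at hjx
    rw [← Nat.div_lt_iff_lt_mul ht, ← h.apply_div] at hxj
    rw [← Nat.le_div_iff_mul_le ht, ← Nat.div_lt_iff_lt_mul ht]
    exact ⟨hjx, hxj⟩
  · intro j
    refine ⟨fun i => cut (j * t + i), fun i k hik => cut_mono (by simpa using hik), by simp,
      by simp [add_mul], ?_⟩
    intro i x y hix hyi hxy
    simp only [Fin.val_castSucc, Fin.val_succ, cut_le, lt_cut] at hix hyi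
    exact h.apply_lt_apply x y (by have := h.monotone hxy.le; omega) hxy

/-- The permutation of `Fin (t * M)` acting by `f y` on the `y`-th block of `M` consecutive
elements. -/
def blockDiag (t M : ℕ) : (Fin t → Perm (Fin M)) →* Perm (Fin (t * M)) where
  toFun f := finProdFinEquiv.permCongr (prodCongrRight f)
  map_one' := by ext; simp [Nat.mod_add_div]
  map_mul' f g := by ext; simp [permCongr_apply]

section blockDiag
variable {t M : ℕ} (f : Fin t → Perm (Fin M)) (x : Fin (t * M))

theorem blockDiag_apply :
    blockDiag t M f x = finProdFinEquiv (x.divNat, f x.divNat x.modNat) :=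
  rfl

@[simp]
theorem divNat_blockDiag_apply : (blockDiag t M f x).divNat = x.divNat :=
  congrArg Prod.fst (finProdFinEquiv.symm_apply_apply (x.divNat, f x.divNat x.modNat))

@[simp]
theorem modNat_blockDiag_apply : (blockDiag t M f x).modNat = f x.divNat x.modNat :=
  congrArg Prod.snd (finProdFinEquiv.symm_apply_apply (x.divNat, f x.divNat x.modNat))

end blockDiag

theorem IsParallelMergeLabelling.blockDiag {t M : ℕ} (ht : 0 < t) {f : Fin t → Perm (Fin M)}
    {κ : Fin t → Fin M → ℕ} (h : ∀ y, IsParallelMergeLabelling (f y) t (κ y)) :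
    IsParallelMergeLabelling (blockDiag t M f) t
      (fun x => t * (M * x.divNat) + κ x.divNat x.modNat) := by
  set K : Fin (t * M) → ℕ := fun x => t * (M * x.divNat) + κ x.divNat x.modNat
  have K_lt : ∀ x, K x < t * (M * (x.divNat + 1)) := fun x => by
    have := (h x.divNat).lt_mul x.modNat
    simp only [K]
    nlinarith
  have K_lt_K : ∀ x y, x.divNat < y.divNat → K x < K y := fun x y hxy =>
    calc K x < t * (M * (x.divNat + 1)) := K_lt x
      _ ≤ t * (M * y.divNat) := by gcongr; exact hxy
      _ ≤ K y := Nat.le_add_right _ _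
  refine ⟨fun x y hxy => ?_, fun x => ?_, fun x => ?_, fun x y hK hxy => ?_⟩
  · rcases (Fin.divNat_mono hxy).lt_or_eq with hd | hd
    · exact (K_lt_K x y hd).le
    · simp only [K, hd]
      exact Nat.add_le_add_left
        ((h _).monotone ((Fin.le_iff_modNat_le_of_divNat_eq hd).1 hxy)) _
  · calc K x < t * (M * (x.divNat + 1)) := K_lt x
      _ ≤ t * M * t := by rw [mul_assoc]; gcongr; exact x.divNat.isLt
  · simp only [K, divNat_blockDiag_apply, modNat_blockDiag_apply, Nat.mul_add_div ht,
      (h _).apply_div]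
  · have hd : x.divNat = y.divNat := by
      by_contra hne
      rcases lt_or_gt_of_ne hne with hlt | hlt
      · exact (K_lt_K x y hlt).ne hK
      · exact (K_lt_K y x hlt).ne' hK
    rw [Fin.lt_iff_modNat_lt_of_divNat_eq (by simpa using hd)]
    simp only [modNat_blockDiag_apply, hd]
    exact (h _).apply_lt_apply _ _ (Nat.add_left_cancel (by simpa only [K, hd] using hK))
      ((Fin.lt_iff_modNat_lt_of_divNat_eq hd).1 hxy)

theorem exists_blockDiag_strictMono_on_blocks {t M : ℕ} (σ : Perm (Fin (t * M))) :
    ∃ g : Fin t → Perm (Fin M), ∀ x y : Fin (t * M), x.divNat = y.divNat → x < y →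
      (σ * blockDiag t M g) x < (σ * blockDiag t M g) y := by
  set row : Fin t → Fin M → Fin (t * M) := fun d u => σ (finProdFinEquiv (d, u))
  refine ⟨fun d => Tuple.sort (row d), fun x y hd hxy => ?_⟩
  have row_inj : ∀ d, Function.Injective (row d) := fun d =>
    σ.injective.comp (finProdFinEquiv.injective.comp (Prod.mk_right_injective d))
  have sorted : StrictMono (row y.divNat ∘ Tuple.sort (row y.divNat)) :=
    (Tuple.monotone_sort _).strictMono_of_injective ((row_inj _).comp (Tuple.sort _).injective)
  simp only [Perm.mul_apply, blockDiag_apply, hd]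
  exact sorted ((Fin.lt_iff_modNat_lt_of_divNat_eq hd).1 hxy)

theorem IsParallelMergeLabelling.of_strictMono_on_blocks {t M : ℕ} {μ : Perm (Fin (t * M))}
    (hμ : ∀ x y : Fin (t * M), x.divNat = y.divNat → x < y → μ x < μ y) :
    IsParallelMergeLabelling μ t (fun x => x.divNat) where
  monotone _ _ hxy := Fin.divNat_mono hxy
  lt_mul x := by
    have : 0 < t * M := x.pos
    calc (x.divNat : ℕ) < t := x.divNat.isLt
      _ ≤ t * M * t := Nat.le_mul_of_pos_left t this
  apply_div x := by rw [Nat.div_eq_of_lt (μ x).divNat.isLt, Nat.div_eq_of_lt x.divNat.isLt]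
  apply_lt_apply x y hxy := hμ x y (Fin.ext hxy)

def HasMergeFactorization {N : ℕ} (t ℓ : ℕ) (σ : Perm (Fin N)) : Prop :=
  ∃ τ : Fin ℓ → Perm (Fin N), (∀ m, ∃ κ, IsParallelMergeLabelling (τ m) t κ) ∧
    σ = (List.ofFn τ).prod

theorem hasMergeFactorization_succ {t M ℓ : ℕ} (ht : 0 < t)
    (ih : ∀ σ : Perm (Fin M), HasMergeFactorization t ℓ σ) (σ : Perm (Fin (t * M))) :
    HasMergeFactorization t (ℓ + 1) σ := by
  obtain ⟨g, hg⟩ := exists_blockDiag_strictMono_on_blocks σ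
  choose τ hτ hprod using fun y => ih (g y)⁻¹
  choose κ hκ using hτ
  have hblocks :
      (List.ofFn fun m => blockDiag t M fun y => τ y m).prod = (blockDiag t M g)⁻¹ := by
    change (List.ofFn (blockDiag t M ∘ fun m y => τ y m)).prod = _
    rw [← List.map_ofFn, ← map_list_prod, ← map_inv]
    congr 1
    funext y
    rw [Pi.list_prod_apply, List.map_ofFn, Pi.inv_apply, hprod y]
    rfl
  refine ⟨Fin.cons (σ * blockDiag t M g) fun m => blockDiag t M fun y => τ y m,
    Fin.cases ⟨_, .of_strictMono_on_blocks hg⟩ fun m => ⟨_, .blockDiag ht fun y => hκ y m⟩, ?_⟩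
  simp only [List.ofFn_succ, List.prod_cons, Fin.cons_zero, Fin.cons_succ, hblocks,
    mul_inv_cancel_right]

theorem hasMergeFactorization_pow {t : ℕ} (ht : 0 < t) (ℓ : ℕ) (σ : Perm (Fin (t ^ ℓ))) :
    HasMergeFactorization t ℓ σ := by
  induction ℓ with
  | zero => exact ⟨Fin.elim0, fun m => m.elim0, Subsingleton.elim (α := Perm (Fin 1)) _ _⟩
  | succ ℓ ih =>
    revert σ
    rw [pow_succ']
    exact hasMergeFactorization_succ ht ih

theorem merge_sort_decomposition (t ℓ : ℕ) (ht : 1 ≤ t) (σ : Equiv.Perm (Fin (t ^ ℓ))) :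
    ∃ L : List (Equiv.Perm (Fin (t ^ ℓ))),
      L.length ≤ ℓ ∧ (∀ τ ∈ L, IsParallelTMerge τ t) ∧ σ = L.prod := by
  obtain ⟨τ, hτ, rfl⟩ := hasMergeFactorization_pow ht ℓ σ
  refine ⟨List.ofFn τ, (List.length_ofFn).le, fun ρ hρ => ?_, rfl⟩
  obtain ⟨m, rfl⟩ := List.mem_ofFn.1 hρ
  obtain ⟨κ, hκ⟩ := hτ m
  exact hκ.isParallelTMerge ht
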